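/- For every s ∈ (0, 1/2] and every t > 0, lim_{x→+∞} x^{1+2s} ∫₀^∞ e^{−t ξ^{2s}} cos(xξ) dξ = t · sin(πs) · ∫₀^∞ u^{2s} e^{−u} du = t · sin(πs) · Γ(1+2s). In particular the limit is strictly positive. -/

import Mathlib

open MeasureTheory

/-- The nonlocal dispersion operator `D[u](t,x)`, in symmetrized form. -/
noncomputable def Dop (J : ℝ → ℝ) (u : ℝ → ℝ → ℝ) (t x : ℝ) : ℝ :=
  ∫ z in Set.Ioi (0:ℝ), (u t (x + z) + u t (x - z) - 2 * u t x) * J z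

/-- Hypothesis (H) on the kernel `J`. -/
def HypH (s J0 J1 R0 : ℝ) (J : ℝ → ℝ) : Prop :=
  0 < J0 ∧ 0 < J1 ∧ 1 ≤ R0 ∧
  (∀ z, 0 ≤ J z) ∧ (∀ z, J (-z) = J z) ∧
  (∫ z in Set.Icc (-1:ℝ) 1, J z * z ^ 2) ≤ 2 * J1 ∧
  (∀ z : ℝ, 1 ≤ |z| → J z ≤ J0 * |z| ^ (-(1 + 2*s))) ∧
  (∀ z : ℝ, R0 ≤ |z| → J0⁻¹ * |z| ^ (-(1 + 2*s)) ≤ J z)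

/-- An ignition nonlinearity with threshold `θ`. -/
def Ignition (θ : ℝ) (f : ℝ → ℝ) : Prop :=
  (∃ K : NNReal, LipschitzOnWith K f (Set.Icc 0 1)) ∧
  (∀ u : ℝ, 0 ≤ u → u ≤ θ → f u = 0) ∧
  (∀ u : ℝ, θ < u → u < 1 → 0 < f u) ∧
  f 1 = 0

/-- The profile `w(t,x) = (x^{2s}/(κt) + γ)⁻¹`. -/
noncomputable def w (s κ γ t x : ℝ) : ℝ := (x ^ (2*s) / (κ * t) + γ)⁻¹

/-- The level point `X(t)` where `w(t, X(t)) = ε`. -/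
noncomputable def X (s κ γ ε t : ℝ) : ℝ :=
  (ε⁻¹ - γ) ^ (1/(2*s)) * (κ * t) ^ (1/(2*s))

/-- The sub-solution `u̲`. -/
noncomputable def ubar (s κ γ ε t x : ℝ) : ℝ :=
  if x ≤ X s κ γ ε t then ε
  else 3 * (1 - w s κ γ t x / ε + (w s κ γ t x) ^ 2 / (3 * ε ^ 2)) * w s κ γ t x

/-- The Fourier symbol of the dispersion operator. -/
noncomputable def W (J : ℝ → ℝ) (ξ : ℝ) : ℝ := ∫ y : ℝ, (Real.cos (ξ * y) - 1) * J y

open Set Filter MeasureTheory Topology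
open scoped Real Complex
open Complex (I)

/-!
Write `c = 2s ∈ (0, 1]`. The kernel is the real part of `∫₀^∞ f(r) dr` with
`f(z) = exp(-t z^c + i x z)`. The integral of `f` along the ray `arg z = θ` does not depend on
`θ ∈ [0, π/2]`: its `θ`-derivative is `i` times the integral of the `r`-derivative of
`r e^{iθ} f(r e^{iθ})`, which vanishes at both ends, and `cos(cθ) ≥ 0` keeps every integral
convergent. On the imaginary axis the oscillation turns into the decay `e^{-xr}`; after `r = u/x`,
`x^{1+c}` times the kernel is `-Im ∫₀^∞ x^c (e^{-w u^c / x^c} - 1) e^{-u} du` with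
`w = t e^{iπc/2}`, and dominated convergence (`|e^z - 1| ≤ |z|` for `Re z ≤ 0`) gives the limit
`Im(w) Γ(1 + c) = t sin(πc/2) Γ(1 + c)`.
-/

theorem Complex.norm_exp_sub_one_le_of_re_nonpos {z : ℂ} (hz : z.re ≤ 0) :
    ‖cexp z - 1‖ ≤ ‖z‖ := by
  have hderiv : ∀ τ ∈ Icc (0 : ℝ) 1,
      HasDerivWithinAt (fun τ : ℝ => cexp (τ * z)) (z * cexp (τ * z)) (Icc 0 1) τ := by
    intro τ _
    simpa [mul_comm] using
      (((Complex.ofRealCLM.hasDerivAt (x := τ)).mul_const z).cexp).hasDerivWithinAt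
  have hbound : ∀ τ ∈ Ico (0 : ℝ) 1, ‖z * cexp (τ * z)‖ ≤ ‖z‖ := by
    intro τ hτ
    rw [norm_mul, Complex.norm_exp]
    refine mul_le_of_le_one_right (norm_nonneg z) (Real.exp_le_one_iff.mpr ?_)
    simpa using mul_nonpos_of_nonneg_of_nonpos hτ.1 hz
  simpa using norm_image_sub_le_of_norm_deriv_le_segment_01' hderiv hbound

theorem Complex.tendsto_mul_exp_div_sub_one (a : ℂ) :
    Tendsto (fun y : ℝ => (y : ℂ) * (cexp (a / y) - 1)) atTop (𝓝 a) := by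
  have hd : HasDerivAt (fun ε : ℝ => cexp (a * ε)) a 0 := by
    simpa using ((Complex.ofRealCLM.hasDerivAt (x := (0 : ℝ))).const_mul a).cexp
  have hinv : Tendsto (fun y : ℝ => y⁻¹) atTop (𝓝[≠] 0) :=
    tendsto_inv_atTop_nhdsGT_zero.mono_right (nhdsWithin_mono _ fun _ h => ne_of_gt h)
  refine ((hasDerivAt_iff_tendsto_slope.mp hd).comp hinv).congr' ?_
  filter_upwards [eventually_ne_atTop 0] with y hy
  simp [slope_def_module, div_eq_mul_inv]

theorem eq_of_continuousOn_Icc_of_hasDerivAt_zero {E : Type*} [NormedAddCommGroup E]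
    [NormedSpace ℝ E] {f : ℝ → E} {a b : ℝ} (hab : a < b) (hf : ContinuousOn f (Icc a b))
    (hf' : ∀ x ∈ Ioo a b, HasDerivAt f 0 x) : f a = f b := by
  obtain ⟨k, hk⟩ := isOpen_Ioo.exists_is_const_of_deriv_eq_zero isPreconnected_Ioo
    (fun y hy => (hf' y hy).differentiableAt.differentiableWithinAt)
    (fun y hy => (hf' y hy).deriv)
  have hext := (show EqOn f (fun _ => k) (Ioo a b) from hk).of_subset_closure hf
    continuousOn_const Ioo_subset_Icc_self (closure_Ioo hab.ne).superset
  rw [hext (left_mem_Icc.mpr hab.le), hext (right_mem_Icc.mpr hab.le)]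

namespace FractionalHeatKernel

-- `e^{iθ} f(r e^{iθ})` for `f z = exp (-t z^c + i x z)`, writing `(r e^{iθ})^c = r^c e^{icθ}`.
noncomputable def rayIntegrand (c t x θ r : ℝ) : ℂ :=
  cexp (θ * I) * cexp (-t * (r ^ c : ℝ) * cexp (c * θ * I) + x * r * cexp (θ * I) * I)

-- Both `∂_r (r * rayIntegrand)` and `-i ∂_θ rayIntegrand` (Cauchy–Riemann in polar form).
noncomputable def rayIntegrandDeriv (c t x θ r : ℝ) : ℂ :=
  (1 - t * c * (r ^ c : ℝ) * cexp (c * θ * I) + x * r * I * cexp (θ * I)) *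
    rayIntegrand c t x θ r

variable {c t x θ r u : ℝ}

theorem hasDerivAt_rayIntegrand_angle :
    HasDerivAt (fun θ => rayIntegrand c t x θ r) (I * rayIntegrandDeriv c t x θ r) θ := by
  have hθ : HasDerivAt (fun θ : ℝ => (θ : ℂ)) 1 θ := Complex.ofRealCLM.hasDerivAt
  have hphase := (hθ.mul_const I).cexp
  have hcphase := ((hθ.const_mul (c : ℂ)).mul_const I).cexp
  refine (hphase.mul (((hcphase.const_mul (-t * (r ^ c : ℝ) : ℂ)).add
    ((hphase.const_mul (x * r : ℂ)).mul_const I)).cexp)).congr_deriv ?_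
  simp only [rayIntegrandDeriv, rayIntegrand, Pi.add_apply]
  ring

theorem hasDerivAt_mul_rayIntegrand_radius (hr : 0 < r) :
    HasDerivAt (fun r : ℝ => r * rayIntegrand c t x θ r) (rayIntegrandDeriv c t x θ r) r := by
  have hR : HasDerivAt (fun r : ℝ => (r : ℂ)) 1 r := Complex.ofRealCLM.hasDerivAt
  have hpow : HasDerivAt (fun r : ℝ => ((r ^ c : ℝ) : ℂ)) ((c * r ^ (c - 1) : ℝ) : ℂ) r :=
    (Real.hasDerivAt_rpow_const (Or.inl hr.ne')).ofReal_comp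
  have hexp := (((hpow.const_mul (-t : ℂ)).mul_const (cexp (c * θ * I))).add
    (((hR.const_mul (x : ℂ)).mul_const (cexp (θ * I))).mul_const I)).cexp
  have hrpow : (r : ℂ) * ((c * r ^ (c - 1) : ℝ) : ℂ) = c * ((r ^ c : ℝ) : ℂ) := by
    norm_cast
    rw [Real.rpow_sub_one hr.ne']
    field_simp
  refine (hR.mul (hexp.const_mul (cexp (θ * I)))).congr_deriv ?_
  simp only [rayIntegrandDeriv, rayIntegrand, Pi.add_apply]
  linear_combination (-t * cexp (c * θ * I) * cexp (θ * I) *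
    cexp (-t * (r ^ c : ℝ) * cexp (c * θ * I) + x * r * cexp (θ * I) * I)) * hrpow

theorem norm_rayIntegrand :
    ‖rayIntegrand c t x θ r‖ = Real.exp (-(t * r ^ c * Real.cos (c * θ)) - x * r * Real.sin θ) := by
  rw [rayIntegrand, norm_mul, Complex.norm_exp, Complex.norm_exp, ← Real.exp_add]
  congr 1
  simp [Complex.exp_ofReal_mul_I_re, Complex.exp_ofReal_mul_I_im, Complex.mul_re, Complex.mul_im]
  rw [show (c : ℂ) * θ * I = ((c * θ : ℝ) : ℂ) * I by push_cast; ring,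
    Complex.exp_ofReal_mul_I_re]
  ring

theorem cos_le_cos_mul (hc : c ∈ Icc 0 1) (hθ : θ ∈ Icc 0 π) :
    Real.cos θ ≤ Real.cos (c * θ) :=
  Real.cos_le_cos_of_nonneg_of_le_pi (mul_nonneg hc.1 hθ.1) hθ.2 (mul_le_of_le_one_left hθ.1 hc.2)

theorem norm_rayIntegrand_le_exp_sin (ht : 0 ≤ t) (hc : c ∈ Icc 0 1) (hθ : θ ∈ Icc 0 (π / 2))
    (hr : 0 ≤ r) : ‖rayIntegrand c t x θ r‖ ≤ Real.exp (-(x * Real.sin θ) * r) := by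
  have hcos : 0 ≤ Real.cos (c * θ) :=
    (Real.cos_nonneg_of_mem_Icc ⟨by linarith [Real.pi_pos, hθ.1], hθ.2⟩).trans
      (cos_le_cos_mul hc ⟨hθ.1, by linarith [hθ.2, Real.pi_pos]⟩)
  rw [norm_rayIntegrand]
  gcongr
  nlinarith [mul_nonneg (mul_nonneg ht (Real.rpow_nonneg hr c)) hcos]

theorem norm_rayIntegrand_le_add (ht : 0 ≤ t) (hx : 0 ≤ x) (hc : c ∈ Icc 0 1)
    (hθ : θ ∈ Icc 0 (π / 2)) (hr : 0 ≤ r) :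
    ‖rayIntegrand c t x θ r‖ ≤ Real.exp (-t * r ^ c) + Real.exp (-x * r) := by
  have hθπ : θ ∈ Icc 0 π := ⟨hθ.1, by linarith [hθ.2, Real.pi_pos]⟩
  have hcos : 0 ≤ Real.cos θ := Real.cos_nonneg_of_mem_Icc ⟨by linarith [hθ.1, Real.pi_pos], hθ.2⟩
  have hsin : 0 ≤ Real.sin θ := Real.sin_nonneg_of_nonneg_of_le_pi hθπ.1 hθπ.2
  have hsum : 1 ≤ Real.cos θ + Real.sin θ := by
    nlinarith [Real.cos_sq_add_sin_sq θ, mul_nonneg hcos hsin]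
  set m := min (t * r ^ c) (x * r)
  have hm : m ≤ t * r ^ c * Real.cos (c * θ) + x * r * Real.sin θ := by
    have h1 : m * Real.cos θ ≤ t * r ^ c * Real.cos (c * θ) :=
      (mul_le_mul_of_nonneg_right (min_le_left _ _) hcos).trans
        (mul_le_mul_of_nonneg_left (cos_le_cos_mul hc hθπ) (by positivity))
    have h2 : m * Real.sin θ ≤ x * r * Real.sin θ :=
      mul_le_mul_of_nonneg_right (min_le_right _ _) hsin
    have hm0 : 0 ≤ m := le_min (by positivity) (by positivity)
    nlinarith
  rw [norm_rayIntegrand]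
  calc Real.exp (-(t * r ^ c * Real.cos (c * θ)) - x * r * Real.sin θ)
      ≤ Real.exp (-m) := by gcongr; linarith
    _ ≤ Real.exp (-t * r ^ c) + Real.exp (-x * r) := by
      rcases min_choice (t * r ^ c) (x * r) with h | h <;>
        simp only [m, h, neg_mul] <;>
        linarith [Real.exp_pos (-(t * r ^ c)), Real.exp_pos (-(x * r))]

theorem norm_rayIntegrandDeriv_le (ht : 0 ≤ t) (hx : 0 ≤ x) (hc : c ∈ Icc 0 1)
    (hθ : θ ∈ Icc 0 (π / 2)) (hr : 0 ≤ r) :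
    ‖rayIntegrandDeriv c t x θ r‖ ≤
      (1 + t * c * r ^ c + x * r) * Real.exp (-(x * Real.sin θ) * r) := by
  rw [rayIntegrandDeriv, norm_mul]
  have hc0 := hc.1
  refine mul_le_mul ?_ (norm_rayIntegrand_le_exp_sin ht hc hθ hr) (norm_nonneg _)
    (by positivity)
  calc _ ≤ ‖(1 : ℂ)‖ + ‖(t * c * (r ^ c : ℝ) : ℂ) * cexp (c * θ * I)‖ +
        ‖(x * r : ℂ) * I * cexp (θ * I)‖ :=
      (norm_add_le _ _).trans (by gcongr; exact norm_sub_le _ _)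
    _ = 1 + t * c * r ^ c + x * r := by
      rw [show (c : ℂ) * θ * I = ((c * θ : ℝ) : ℂ) * I by push_cast; ring]
      simp only [norm_mul, Complex.norm_exp_ofReal_mul_I, Complex.norm_I, norm_one, mul_one,
        Complex.norm_real, Real.norm_eq_abs, abs_of_nonneg ht, abs_of_nonneg hc.1,
        abs_of_nonneg hx, abs_of_nonneg hr, abs_of_nonneg (Real.rpow_nonneg hr c)]

theorem continuous_rayIntegrand_radius (hc : 0 ≤ c) : Continuous (rayIntegrand c t x θ) := by
  have := Real.continuous_rpow_const hc
  unfold rayIntegrand; fun_prop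

theorem continuous_rayIntegrand_angle : Continuous fun θ => rayIntegrand c t x θ r := by
  unfold rayIntegrand; fun_prop

theorem continuous_rayIntegrandDeriv_radius (hc : 0 ≤ c) :
    Continuous (rayIntegrandDeriv c t x θ) := by
  have := Real.continuous_rpow_const hc
  have := continuous_rayIntegrand_radius (t := t) (x := x) (θ := θ) hc
  unfold rayIntegrandDeriv; fun_prop

theorem integrableOn_exp_neg_mul_rpow_add_exp_neg_mul (ht : 0 < t) (hx : 0 < x) (hc : 0 < c) :
    IntegrableOn (fun r => Real.exp (-t * r ^ c) + Real.exp (-x * r)) (Ioi 0) :=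
  (by simpa using integrableOn_rpow_mul_exp_neg_mul_rpow (s := 0) (by norm_num) hc ht :
    IntegrableOn (fun r : ℝ => Real.exp (-t * r ^ c)) (Ioi 0)).add (exp_neg_integrableOn_Ioi 0 hx)

theorem integrableOn_affine_rpow_mul_exp_neg_mul {m : ℝ} (hm : 0 < m) (hc : 0 < c) (a b : ℝ) :
    IntegrableOn (fun r => (1 + a * r ^ c + b * r) * Real.exp (-m * r)) (Ioi 0) := by
  have hpow : ∀ q : ℝ, -1 < q → IntegrableOn (fun r => r ^ q * Real.exp (-m * r)) (Ioi 0) :=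
    fun q hq => by simpa using integrableOn_rpow_mul_exp_neg_mul_rpow hq one_pos hm
  refine (((hpow 0 (by norm_num)).add ((hpow c (by linarith)).const_mul a)).add
    ((hpow 1 (by norm_num)).const_mul b)).congr_fun (fun r _ => ?_) measurableSet_Ioi
  simp only [Pi.add_apply, Real.rpow_zero, Real.rpow_one]
  ring

theorem integrableOn_rayIntegrand (ht : 0 < t) (hx : 0 < x) (hc : c ∈ Ioc 0 1)
    (hθ : θ ∈ Icc 0 (π / 2)) :
    IntegrableOn (rayIntegrand c t x θ) (Ioi 0) :=
  (integrableOn_exp_neg_mul_rpow_add_exp_neg_mul ht hx hc.1).mono'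
    (continuous_rayIntegrand_radius hc.1.le).aestronglyMeasurable.restrict <|
    (ae_restrict_iff' measurableSet_Ioi).mpr <| ae_of_all _ fun _ hr =>
      norm_rayIntegrand_le_add ht.le hx.le (Ioc_subset_Icc_self hc) hθ (le_of_lt hr)

theorem integrableOn_rayIntegrandDeriv (ht : 0 ≤ t) (hx : 0 < x) (hc : c ∈ Ioc 0 1)
    (hθ : θ ∈ Ioc 0 (π / 2)) : IntegrableOn (rayIntegrandDeriv c t x θ) (Ioi 0) := by
  have hsin : 0 < Real.sin θ := Real.sin_pos_of_pos_of_lt_pi hθ.1 (by linarith [hθ.2, Real.pi_pos])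
  exact (integrableOn_affine_rpow_mul_exp_neg_mul (by positivity) hc.1 (t * c) x).mono'
    (continuous_rayIntegrandDeriv_radius hc.1.le).aestronglyMeasurable.restrict <|
    (ae_restrict_iff' measurableSet_Ioi).mpr <| ae_of_all _ fun _ hr =>
      norm_rayIntegrandDeriv_le ht hx.le (Ioc_subset_Icc_self hc) (Ioc_subset_Icc_self hθ)
        (le_of_lt hr)

theorem integral_rayIntegrandDeriv (ht : 0 ≤ t) (hx : 0 < x) (hc : c ∈ Ioc 0 1)
    (hθ : θ ∈ Ioc 0 (π / 2)) : ∫ r in Ioi 0, rayIntegrandDeriv c t x θ r = 0 := by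
  have hsin : 0 < Real.sin θ := Real.sin_pos_of_pos_of_lt_pi hθ.1 (by linarith [hθ.2, Real.pi_pos])
  have hdecay : Tendsto (fun r : ℝ => (r : ℂ) * rayIntegrand c t x θ r) atTop (𝓝 0) := by
    have hexp := tendsto_rpow_mul_exp_neg_mul_atTop_nhds_zero 1 _ (mul_pos hx hsin)
    simp only [Real.rpow_one] at hexp
    refine squeeze_zero_norm' ?_ hexp
    filter_upwards [eventually_ge_atTop 0] with r hr
    rw [norm_mul, Complex.norm_real, Real.norm_of_nonneg hr]
    exact mul_le_mul_of_nonneg_left (norm_rayIntegrand_le_exp_sin ht (Ioc_subset_Icc_self hc)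
      (Ioc_subset_Icc_self hθ) hr) hr
  rw [integral_Ioi_of_hasDerivAt_of_tendsto
    ((Complex.continuous_ofReal.mul (continuous_rayIntegrand_radius hc.1.le)).continuousWithinAt)
    (fun r hr => hasDerivAt_mul_rayIntegrand_radius hr)
    (integrableOn_rayIntegrandDeriv ht hx hc hθ) hdecay]
  simp

noncomputable def rayIntegral (c t x θ : ℝ) : ℂ := ∫ r in Ioi 0, rayIntegrand c t x θ r

theorem hasDerivAt_rayIntegral (ht : 0 < t) (hx : 0 < x) (hc : c ∈ Ioc 0 1)
    (hθ : θ ∈ Ioo 0 (π / 2)) : HasDerivAt (rayIntegral c t x) 0 θ := by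
  have hsin : 0 < Real.sin (θ / 2) := Real.sin_pos_of_pos_of_lt_pi (by linarith [hθ.1])
    (by linarith [hθ.2, Real.pi_pos])
  have hbound : ∀ r ∈ Ioi (0 : ℝ), ∀ θ' ∈ Ioo (θ / 2) (π / 2),
      ‖I * rayIntegrandDeriv c t x θ' r‖ ≤
        (1 + t * c * r ^ c + x * r) * Real.exp (-(x * Real.sin (θ / 2)) * r) := by
    intro r (hr : 0 < r) θ' hθ'
    have hθ'' : θ' ∈ Icc 0 (π / 2) := ⟨by linarith [hθ.1, hθ'.1], hθ'.2.le⟩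
    rw [norm_mul, Complex.norm_I, one_mul]
    refine (norm_rayIntegrandDeriv_le ht.le hx.le (Ioc_subset_Icc_self hc) hθ'' hr.le).trans ?_
    have hmono : Real.sin (θ / 2) ≤ Real.sin θ' := Real.sin_le_sin_of_le_of_le_pi_div_two
      (by linarith [hθ.1, Real.pi_pos]) hθ'.2.le hθ'.1.le
    have := hc.1
    gcongr
  have hdom := hasDerivAt_integral_of_dominated_loc_of_deriv_le (μ := volume.restrict (Ioi 0))
    (F := fun θ' r => rayIntegrand c t x θ' r) (F' := fun θ' r => I * rayIntegrandDeriv c t x θ' r)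
    (Ioo_mem_nhds (half_lt_self hθ.1) hθ.2)
    (Eventually.of_forall fun _ => (continuous_rayIntegrand_radius hc.1.le).aestronglyMeasurable)
    (integrableOn_rayIntegrand ht hx hc (Ioo_subset_Icc_self hθ))
    (continuous_const.mul (continuous_rayIntegrandDeriv_radius hc.1.le)).aestronglyMeasurable
    ((ae_restrict_iff' measurableSet_Ioi).mpr (ae_of_all _ hbound))
    (integrableOn_affine_rpow_mul_exp_neg_mul (mul_pos hx hsin) hc.1 (t * c) x)
    (ae_of_all _ fun _ θ' _ => hasDerivAt_rayIntegrand_angle)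
  rw [integral_const_mul, integral_rayIntegrandDeriv ht.le hx hc (Ioo_subset_Ioc_self hθ),
    mul_zero] at hdom
  exact hdom.2

theorem continuousOn_rayIntegral (ht : 0 < t) (hx : 0 < x) (hc : c ∈ Ioc 0 1) :
    ContinuousOn (rayIntegral c t x) (Icc 0 (π / 2)) :=
  continuousOn_of_dominated
    (fun _ _ => (continuous_rayIntegrand_radius hc.1.le).aestronglyMeasurable)
    (fun _ hθ => (ae_restrict_iff' measurableSet_Ioi).mpr <| ae_of_all _ fun _ hr =>
      norm_rayIntegrand_le_add ht.le hx.le (Ioc_subset_Icc_self hc) hθ (le_of_lt hr))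
    (integrableOn_exp_neg_mul_rpow_add_exp_neg_mul ht hx hc.1)
    (ae_of_all _ fun _ => continuous_rayIntegrand_angle.continuousOn)

theorem rayIntegral_zero_eq_rayIntegral_pi_div_two (ht : 0 < t) (hx : 0 < x) (hc : c ∈ Ioc 0 1) :
    rayIntegral c t x 0 = rayIntegral c t x (π / 2) :=
  eq_of_continuousOn_Icc_of_hasDerivAt_zero (by positivity) (continuousOn_rayIntegral ht hx hc)
    fun _ hθ => hasDerivAt_rayIntegral ht hx hc hθ

theorem re_rayIntegral_zero (ht : 0 < t) (hx : 0 < x) (hc : c ∈ Ioc 0 1) :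
    (rayIntegral c t x 0).re = ∫ r in Ioi 0, Real.exp (-t * r ^ c) * Real.cos (x * r) := by
  rw [rayIntegral, ← RCLike.re_to_complex,
    ← integral_re (integrableOn_rayIntegrand ht hx hc ⟨le_rfl, by positivity⟩)]
  refine setIntegral_congr_fun measurableSet_Ioi fun r _ => ?_
  simp [rayIntegrand, Complex.exp_re, Complex.mul_re, Complex.mul_im]

theorem rayIntegral_pi_div_two :
    rayIntegral c t x (π / 2) =
      I * ∫ r in Ioi 0, cexp (-(t * cexp ((c * (π / 2) : ℝ) * I)) * (r ^ c : ℝ) - x * r) := by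
  rw [rayIntegral, ← integral_const_mul]
  refine setIntegral_congr_fun measurableSet_Ioi fun r _ => ?_
  simp only [rayIntegrand, Complex.ofReal_div, Complex.ofReal_ofNat, Complex.exp_pi_div_two_mul_I]
  push_cast
  congr 2
  linear_combination (x * r : ℂ) * Complex.I_mul_I

theorem integral_rpow_mul_exp_neg (hc : -1 < c) :
    ∫ u in Ioi 0, u ^ c * Real.exp (-u) = Real.Gamma (1 + c) := by
  rw [Real.Gamma_eq_integral (by linarith), add_sub_cancel_left]
  simp only [mul_comm]

noncomputable def tailIntegrand (w : ℂ) (c x u : ℝ) : ℂ :=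
  (x ^ c : ℝ) * (cexp (-w * (u ^ c : ℝ) / (x ^ c : ℝ)) - 1) * cexp (-u)

theorem re_neg_mul_rpow_div_rpow_nonpos {w : ℂ} (hw : 0 ≤ w.re) (hx : 0 < x) (hu : 0 ≤ u) :
    (-w * (u ^ c : ℝ) / (x ^ c : ℝ)).re ≤ 0 := by
  have hxc : 0 < x ^ c := Real.rpow_pos_of_pos hx c
  have huc : 0 ≤ u ^ c := Real.rpow_nonneg hu c
  rw [show -w * (u ^ c : ℝ) / (x ^ c : ℝ) = ((-(u ^ c / x ^ c) : ℝ) : ℂ) * w by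
    push_cast; ring, Complex.re_ofReal_mul]
  exact mul_nonpos_of_nonpos_of_nonneg (neg_nonpos.mpr (by positivity)) hw

theorem norm_tailIntegrand_le {w : ℂ} (hw : 0 ≤ w.re) (hx : 0 < x) (hu : 0 ≤ u) :
    ‖tailIntegrand w c x u‖ ≤ ‖w‖ * (u ^ c * Real.exp (-u)) := by
  have hxc : 0 < x ^ c := Real.rpow_pos_of_pos hx c
  have huc : 0 ≤ u ^ c := Real.rpow_nonneg hu c
  have hre := re_neg_mul_rpow_div_rpow_nonpos (c := c) hw hx hu
  rw [tailIntegrand, norm_mul, norm_mul, Complex.norm_real, Real.norm_of_nonneg hxc.le,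
    ← Complex.ofReal_neg, Complex.norm_exp_ofReal]
  calc x ^ c * ‖cexp (-w * (u ^ c : ℝ) / (x ^ c : ℝ)) - 1‖ * Real.exp (-u)
      ≤ x ^ c * ‖-w * (u ^ c : ℝ) / (x ^ c : ℝ)‖ * Real.exp (-u) := by
        gcongr; exact Complex.norm_exp_sub_one_le_of_re_nonpos hre
    _ = ‖w‖ * (u ^ c * Real.exp (-u)) := by
        rw [norm_div, norm_mul, norm_neg, Complex.norm_real, Complex.norm_real,
          Real.norm_of_nonneg huc, Real.norm_of_nonneg hxc.le]
        field_simp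

theorem tendsto_tailIntegrand (w : ℂ) (hc : 0 < c) (u : ℝ) :
    Tendsto (fun x => tailIntegrand w c x u) atTop (𝓝 (-w * (u ^ c : ℝ) * cexp (-u))) :=
  (((Complex.tendsto_mul_exp_div_sub_one (-w * (u ^ c : ℝ))).comp
    (tendsto_rpow_atTop hc)).mul_const (cexp (-u)))

theorem integral_tailIntegrand {w : ℂ} (hw : 0 ≤ w.re) (hx : 0 < x) :
    ∫ u in Ioi 0, tailIntegrand w c x u =
      (x ^ (1 + c) : ℝ) * (∫ r in Ioi 0, cexp (-w * (r ^ c : ℝ) - x * r)) - (x ^ c : ℝ) := by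
  have hxc : 0 < x ^ c := Real.rpow_pos_of_pos hx c
  set g : ℝ → ℂ := fun u => cexp (-w * (u ^ c : ℝ) / (x ^ c : ℝ) - u)
  have hexp : IntegrableOn (fun u : ℝ => cexp (-u)) (Ioi 0) := by
    simpa using integrableOn_exp_mul_complex_Ioi (a := -1) (by simp) 0
  have hg : IntegrableOn g (Ioi 0) := by
    refine (integrableOn_exp_neg_Ioi 0).mono' (by fun_prop : Measurable g).aestronglyMeasurable
      ((ae_restrict_iff' measurableSet_Ioi).mpr (ae_of_all _ fun u (hu : 0 < u) => ?_))
    rw [Complex.norm_exp]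
    gcongr
    rw [Complex.sub_re, Complex.ofReal_re]
    linarith [re_neg_mul_rpow_div_rpow_nonpos (c := c) hw hx hu.le]
  have hscale : ∫ r in Ioi 0, cexp (-w * (r ^ c : ℝ) - x * r) = (x⁻¹ : ℝ) * ∫ u in Ioi 0, g u := by
    have h := integral_comp_mul_left_Ioi g 0 hx
    rw [mul_zero] at h
    rw [← Complex.real_smul, ← h]
    refine setIntegral_congr_fun measurableSet_Ioi fun r (hr : 0 < r) => ?_
    simp only [g, Real.mul_rpow hx.le hr.le]
    have hxc' : ((x ^ c : ℝ) : ℂ) ≠ 0 := by exact_mod_cast hxc.ne'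
    push_cast
    field_simp
  have hsplit : ∀ u : ℝ, tailIntegrand w c x u = (x ^ c : ℝ) * g u - (x ^ c : ℝ) * cexp (-u) := by
    intro u
    simp only [tailIntegrand, g, sub_eq_add_neg (_ / _), Complex.exp_add]
    ring
  have hexp1 : ∫ u in Ioi (0 : ℝ), cexp (-u) = 1 := by
    simpa using integral_exp_mul_complex_Ioi (a := -1) (by simp) 0
  simp only [hsplit]
  rw [integral_sub (hg.const_mul _) (hexp.const_mul _), integral_const_mul, integral_const_mul,
    hexp1, hscale, Real.rpow_add hx, Real.rpow_one]
  have hx' : (x : ℂ) ≠ 0 := by exact_mod_cast hx.ne'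
  push_cast
  field_simp

theorem tendsto_integral_tailIntegrand {w : ℂ} (hw : 0 ≤ w.re) (hc : 0 < c) :
    Tendsto (fun x => ∫ u in Ioi 0, tailIntegrand w c x u) atTop
      (𝓝 (-w * Real.Gamma (1 + c))) := by
  have hlim : ∫ u in Ioi 0, -w * (u ^ c : ℝ) * cexp (-u) = -w * Real.Gamma (1 + c) := by
    rw [← integral_rpow_mul_exp_neg (by linarith), ← integral_complex_ofReal,
      ← integral_const_mul]
    push_cast
    simp only [mul_assoc]
  have hgamma : IntegrableOn (fun u : ℝ => u ^ c * Real.exp (-u)) (Ioi 0) := by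
    simpa using integrableOn_rpow_mul_exp_neg_mul_rpow (by linarith) one_pos one_pos
  have hbound := hgamma.const_mul ‖w‖
  rw [← hlim]
  refine tendsto_integral_filter_of_dominated_convergence _
    (Eventually.of_forall fun x => (by unfold tailIntegrand; fun_prop :
      Measurable (tailIntegrand w c x)).aestronglyMeasurable) ?_ hbound
    (ae_of_all _ fun u => tendsto_tailIntegrand w hc u)
  filter_upwards [eventually_gt_atTop 0] with x hx
  exact (ae_restrict_iff' measurableSet_Ioi).mpr <| ae_of_all _ fun u (hu : 0 < u) =>
    norm_tailIntegrand_le hw hx hu.le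

theorem re_mul_exp_mul_pi_div_two_nonneg (ht : 0 ≤ t) (hc : c ∈ Icc 0 1) :
    0 ≤ ((t : ℂ) * cexp ((c * (π / 2) : ℝ) * I)).re := by
  rw [Complex.re_ofReal_mul, Complex.exp_ofReal_mul_I_re]
  exact mul_nonneg ht (Real.cos_nonneg_of_mem_Icc ⟨by nlinarith [Real.pi_pos, hc.1],
    by nlinarith [Real.pi_pos, hc.2]⟩)

theorem rpow_mul_integral_exp_neg_rpow_mul_cos (ht : 0 < t) (hx : 0 < x) (hc : c ∈ Ioc 0 1) :
    x ^ (1 + c) * ∫ r in Ioi 0, Real.exp (-t * r ^ c) * Real.cos (x * r) =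
      -(∫ u in Ioi 0, tailIntegrand (t * cexp ((c * (π / 2) : ℝ) * I)) c x u).im := by
  rw [← re_rayIntegral_zero ht hx hc, rayIntegral_zero_eq_rayIntegral_pi_div_two ht hx hc,
    rayIntegral_pi_div_two, integral_tailIntegrand
      (re_mul_exp_mul_pi_div_two_nonneg ht.le (Ioc_subset_Icc_self hc)) hx]
  simp

theorem tendsto_rpow_mul_integral_exp_neg_rpow_mul_cos (ht : 0 < t) (hc : c ∈ Ioc 0 1) :
    Tendsto (fun x => x ^ (1 + c) * ∫ r in Ioi 0, Real.exp (-t * r ^ c) * Real.cos (x * r))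
      atTop (𝓝 (t * Real.sin (c * (π / 2)) * Real.Gamma (1 + c))) := by
  set w : ℂ := t * cexp ((c * (π / 2) : ℝ) * I) with hw
  have hlim := ((Complex.continuous_im.tendsto _).comp (tendsto_integral_tailIntegrand
    (re_mul_exp_mul_pi_div_two_nonneg ht.le (Ioc_subset_Icc_self hc)) hc.1)).neg
  have hvalue :
      -(-w * Real.Gamma (1 + c)).im = t * Real.sin (c * (π / 2)) * Real.Gamma (1 + c) := by
    rw [neg_mul, Complex.neg_im, neg_neg, Complex.im_mul_ofReal, hw, Complex.im_ofReal_mul,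
      Complex.exp_ofReal_mul_I_im]
  rw [← hvalue]
  refine hlim.congr' ?_
  filter_upwards [eventually_gt_atTop 0] with x hx
  exact (rpow_mul_integral_exp_neg_rpow_mul_cos ht hx hc).symm

end FractionalHeatKernel

open FractionalHeatKernel in
/-- the algebraic-tail limit of the fractional heat kernel. -/
theorem fractional_heat_kernel_tail
    (s t : ℝ) (hs : 0 < s ∧ s ≤ 1/2) (ht : 0 < t) :
    (∫ u in Set.Ioi (0:ℝ), u ^ (2*s) * Real.exp (-u)) = Real.Gamma (1 + 2*s) ∧
    0 < t * Real.sin (Real.pi * s) * Real.Gamma (1 + 2*s) ∧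
    Filter.Tendsto
      (fun x : ℝ => x ^ (1 + 2*s) *
        ∫ ξ in Set.Ioi (0:ℝ), Real.exp (-t * ξ ^ (2*s)) * Real.cos (x * ξ))
      Filter.atTop
      (nhds (t * Real.sin (Real.pi * s) * Real.Gamma (1 + 2*s))) := by
  have hc : 2 * s ∈ Ioc 0 1 := ⟨by linarith, by linarith⟩
  have hsin : Real.sin (Real.pi * s) = Real.sin (2 * s * (π / 2)) := by ring_nf
  refine ⟨integral_rpow_mul_exp_neg (by linarith), ?_, ?_⟩
  · have hsin_pos := Real.sin_pos_of_pos_of_lt_pi (x := π * s) (by nlinarith [Real.pi_pos])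
      (by nlinarith [Real.pi_pos])
    have hGamma_pos := Real.Gamma_pos_of_pos (s := 1 + 2 * s) (by linarith)
    positivity
  · rw [hsin]
    exact tendsto_rpow_mul_integral_exp_neg_rpow_mul_cos ht hc
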